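/- arXiv:2005.02059 — 2 statements merged into one kernel-verified Lean document; each statement's English description precedes it below -/
import Mathlib

section
/- Let M = ⊕_{i∈I} M_i with Hom_R(M_i, M_j) = 0 for all i ≠ j. If each M_i is a dual Baer R-module, then M is a dual Baer R-module. -/
universe u v w

/-- `M` is a dual Baer module: for every submodule `N` of `M`, the right ideal
`Hom(M,N)` of `End(M)` is generated by an idempotent. -/
def IsDualBaerModule (R : Type u) [Ring R] (M : Type v) [AddCommGroup M]
    [Module R M] : Prop :=
  ∀ N : Submodule R M, ∃ e : Module.End R M, IsIdempotentElem e ∧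
    {f : Module.End R M | LinearMap.range f ≤ N} = Set.range fun s => e * s

/-!
Since there are no nonzero maps between distinct summands, every endomorphism of `⨁ i, M i`
is diagonal, and it maps into `N` exactly when each diagonal block maps `M i` into
`N ∩ M i`. Hence the diagonal endomorphism built from the idempotents generating
`Hom(M i, N ∩ M i)` generates `Hom(⨁ i, M i, N)`.
-/

namespace DirectSum

variable {R : Type*} [Semiring R] {ι : Type*}
  {M N : ι → Type*} [∀ i, AddCommMonoid (M i)] [∀ i, Module R (M i)]
  [∀ i, AddCommMonoid (N i)] [∀ i, Module R (N i)]

theorem lmap_mul (f g : ∀ i, Module.End R (M i)) :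
    lmap (fun i => f i * g i) = lmap f * lmap g :=
  lmap_comp g f

variable [DecidableEq ι]

theorem range_lmap_le_iff (f : ∀ i, M i →ₗ[R] N i) (P : Submodule R (⨁ i, N i)) :
    LinearMap.range (lmap f) ≤ P ↔ ∀ i, LinearMap.range (f i) ≤ P.comap (lof R ι N i) := by
  constructor
  · rintro hP i _ ⟨m, rfl⟩
    simpa only [Submodule.mem_comap, lmap_lof] using hP ⟨lof R ι M i m, rfl⟩
  · rintro hP _ ⟨x, rfl⟩
    induction x using DirectSum.induction_on with
    | zero => simp only [map_zero, P.zero_mem]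
    | of i m =>
      rw [← lof_eq_of R, lmap_lof]
      exact hP i ⟨m, rfl⟩
    | add x y hx hy => rw [map_add]; exact P.add_mem hx hy

theorem eq_lmap_of_hom_eq_zero (hhom : ∀ i j, i ≠ j → ∀ f : M i →ₗ[R] N j, f = 0)
    (f : (⨁ i, M i) →ₗ[R] ⨁ i, N i) :
    f = lmap fun i => component R ι N i ∘ₗ f ∘ₗ lof R ι M i := by
  refine linearMap_ext R fun i => LinearMap.ext fun m => ext_component R fun j => ?_
  simp only [LinearMap.comp_apply, lmap_lof]
  rcases eq_or_ne i j with rfl | hij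
  · rw [component.lof_self]
  · rw [component.of, dif_neg hij]
    exact LinearMap.congr_fun (hhom i j hij (component R ι N j ∘ₗ f ∘ₗ lof R ι M i)) m

end DirectSum

open DirectSum in
theorem stmt10_general (R : Type u) [Ring R] (ι : Type w)
    (M : ι → Type v) [∀ i, AddCommGroup (M i)] [∀ i, Module R (M i)]
    (hhom : ∀ i j, i ≠ j → ∀ f : M i →ₗ[R] M j, f = 0)
    (hdbaer : ∀ i, IsDualBaerModule R (M i)) :
    IsDualBaerModule R (DirectSum ι M) := by
  classical
  intro N
  choose e he hset using fun i => hdbaer i (N.comap (lof R ι M i))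
  have hidem : IsIdempotentElem (lmap e) := by
    rw [IsIdempotentElem, ← lmap_mul]
    simp only [(he _).eq]
  refine ⟨lmap e, hidem, ?_⟩
  ext f
  constructor
  · intro hf
    rw [eq_lmap_of_hom_eq_zero hhom f] at hf ⊢
    have hblock := (range_lmap_le_iff _ N).1 hf
    choose s hs using fun i => (hset i).subset (hblock i)
    exact ⟨lmap s, by simp only [← lmap_mul, hs]⟩
  · rintro ⟨s, rfl⟩
    exact (LinearMap.range_comp_le_range s (lmap e)).trans
      ((range_lmap_le_iff e N).2 fun i => (hset i).superset ⟨1, mul_one (e i)⟩)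

theorem stmt10 (R : Type u) [Ring R] (ι : Type w) [DecidableEq ι]
    (M : ι → Type v) [∀ i, AddCommGroup (M i)] [∀ i, Module R (M i)]
    (hhom : ∀ i j, i ≠ j → ∀ f : M i →ₗ[R] M j, f = 0)
    (hdbaer : ∀ i, IsDualBaerModule R (M i)) :
    IsDualBaerModule R (DirectSum ι M) :=
  stmt10_general R ι M hhom hdbaer
end

section
/- An R-module M is dual Baer if and only if for every nonempty index set Λ and every R-homomorphism f: M^(Λ) → M (from the direct sum of copies of M), the image of f is a direct summand of M. -/
universe u v

/-! For an idempotent `e`, an endomorphism `f` factors as `e * s` iff `range f ≤ range e`.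
Hence `M` is dual Baer iff for every `N ≤ M` the trace of `M` in `N` (`endTrace N`, the sum of the
images of all endomorphisms landing in `N`) is the range of an idempotent, i.e. a direct summand.
These traces are exactly the images of maps `M^(Λ) → M`: the trace of `N` is the image of the sum
map over `Λ = {g | range g ≤ N}`, and `range f` is its own trace, being the sum of the images of
the restrictions of `f` to the copies of `M`. -/

open LinearMap

theorem Finsupp.range_eq_iSup_range_comp_lsingle {R : Type*} [Semiring R] {M N Λ : Type*}
    [AddCommMonoid M] [Module R M] [AddCommMonoid N] [Module R N] (f : (Λ →₀ M) →ₗ[R] N) :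
    range f = ⨆ i, range (f ∘ₗ Finsupp.lsingle i) := by
  rw [range_eq_map, ← Finsupp.iSup_lsingle_range, Submodule.map_iSup]
  simp only [range_comp]

theorem Submodule.exists_isCompl_iff_exists_isIdempotentElem_range_eq {R : Type*} [Ring R]
    {M : Type*} [AddCommGroup M] [Module R M] (p : Submodule R M) :
    (∃ q : Submodule R M, IsCompl p q) ↔ ∃ e : Module.End R M, IsIdempotentElem e ∧ range e = p :=
  ⟨fun ⟨q, hpq⟩ => ⟨p.projection q hpq, isIdempotentElem_projection hpq, range_projection hpq⟩,
    fun ⟨e, he, hep⟩ => ⟨ker e, hep ▸ he.isCompl⟩⟩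

theorem IsIdempotentElem.setOf_range_le_range_eq {R : Type*} [Semiring R] {M : Type*}
    [AddCommMonoid M] [Module R M] {e : Module.End R M} (he : IsIdempotentElem e) :
    {f : Module.End R M | range f ≤ range e} = Set.range fun s => e * s := by
  ext f
  refine ⟨fun hf => ⟨f, (he.comp_eq_right_iff f).2 hf⟩, ?_⟩
  rintro ⟨s, rfl⟩
  exact range_comp_le_range s e

namespace Submodule

variable {R : Type*} [Semiring R] {M : Type*} [AddCommMonoid M] [Module R M]

def endTrace (N : Submodule R M) : Submodule R M :=
  ⨆ g : {g : Module.End R M // range g ≤ N}, range g.1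

variable {N : Submodule R M}

theorem endTrace_le : N.endTrace ≤ N :=
  iSup_le fun g => g.2

theorem range_le_endTrace_iff {g : Module.End R M} : range g ≤ N.endTrace ↔ range g ≤ N :=
  ⟨fun h => h.trans endTrace_le, fun h => le_iSup (fun g : {g // range g ≤ N} => range g.1) ⟨g, h⟩⟩

theorem endTrace_eq_range_lsum :
    N.endTrace = range (Finsupp.lsum ℕ fun g : {g : Module.End R M // range g ≤ N} => g.1) := by
  simp only [Finsupp.range_eq_iSup_range_comp_lsingle, Finsupp.lsum_comp_lsingle, endTrace]

theorem endTrace_range_eq {Λ : Type*} (f : (Λ →₀ M) →ₗ[R] M) : (range f).endTrace = range f := by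
  refine le_antisymm endTrace_le ((Finsupp.range_eq_iSup_range_comp_lsingle f).le.trans ?_)
  exact iSup_le fun i => range_le_endTrace_iff.2 (range_comp_le_range _ _)

end Submodule

theorem isDualBaerModule_iff_forall_exists_isIdempotentElem_range_eq_endTrace
    (R : Type u) [Ring R] (M : Type v) [AddCommGroup M] [Module R M] :
    IsDualBaerModule R M ↔
      ∀ N : Submodule R M, ∃ e : Module.End R M, IsIdempotentElem e ∧ range e = N.endTrace := by
  refine forall_congr' fun N => exists_congr fun e => and_congr_right fun he => ?_
  rw [← he.setOf_range_le_range_eq]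
  constructor
  · intro h
    have hN : ∀ f : Module.End R M, range f ≤ N ↔ range f ≤ range e := fun f => Set.ext_iff.1 h f
    exact le_antisymm (Submodule.range_le_endTrace_iff.2 ((hN e).2 le_rfl))
      (iSup_le fun g => (hN g.1).1 g.2)
  · intro h
    ext f
    change range f ≤ N ↔ range f ≤ range e
    rw [h, Submodule.range_le_endTrace_iff]

theorem stmt13 (R : Type u) [Ring R] (M : Type v) [AddCommGroup M] [Module R M] :
    IsDualBaerModule R M ↔
      ∀ (Λ : Type v), Nonempty Λ → ∀ f : (Λ →₀ M) →ₗ[R] M,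
        ∃ p : Submodule R M, IsCompl (LinearMap.range f) p := by
  simp_rw [isDualBaerModule_iff_forall_exists_isIdempotentElem_range_eq_endTrace,
    Submodule.exists_isCompl_iff_exists_isIdempotentElem_range_eq]
  constructor
  · intro h Λ _ f
    simpa only [Submodule.endTrace_range_eq] using h (range f)
  · intro h N
    rw [Submodule.endTrace_eq_range_lsum]
    exact h _ ⟨⟨0, by simp⟩⟩ _
end
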